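/- arXiv:1807.04129 — 2 statements merged into one kernel-verified Lean document; each statement's English description precedes it below -/
import Mathlib

section
/- (Fixed-point theorem for strong contraction mappings.) Let (X,d) be a nonempty complete bounded metric space and let T : X → X be a continuous map for which there exists q ∈ [0,1) such that, with X_0 = X and X_{i+1} = T(X_i), one has diam(X_{i+1}) ≤ q · diam(X_i) for all i. Then T admits a unique fixed point x* ∈ X, i.e. there exists exactly one x* ∈ X with T(x*) = x*. -/
/-! The closures `K n` of the iterated images are nested, closed, nonempty, and their diameters
tend to `0` geometrically, so by Cantor's intersection theorem `⋂ n, K n` is a single point `x`.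
By continuity `T` maps each `K n` into `K (n + 1) ⊆ K n`, hence `T x = x`; conversely every
fixed point lies in every iterated image, hence equals `x`. -/

def iterImage {X : Type*} (T : X → X) : ℕ → Set X
  | 0 => Set.univ
  | (i + 1) => T '' iterImage T i

open Set Filter Topology Metric

theorem Metric.subsingleton_iInter_of_tendsto_diam {X : Type*} [MetricSpace X] {s : ℕ → Set X}
    (hs : ∀ n, Bornology.IsBounded (s n)) (h : Tendsto (fun n ↦ diam (s n)) atTop (𝓝 0)) :
    (⋂ n, s n).Subsingleton := by
  intro x hx y hy
  rw [mem_iInter] at hx hy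
  have hdist : dist x y ≤ 0 :=
    ge_of_tendsto' h fun n ↦ dist_le_diam_of_mem (hs n) (hx n) (hy n)
  exact dist_le_zero.mp hdist

section iterImage

variable {X : Type*} (T : X → X)

theorem antitone_iterImage : Antitone (iterImage T) := by
  refine antitone_nat_of_succ_le fun n ↦ ?_
  induction n with
  | zero => exact subset_univ _
  | succ n ih => exact image_mono ih

theorem iterImage_nonempty [Nonempty X] (n : ℕ) : (iterImage T n).Nonempty := by
  induction n with
  | zero => exact univ_nonempty
  | succ n ih => exact ih.image T

variable {T}

theorem mem_iterImage_of_isFixedPt {x : X} (hx : Function.IsFixedPt T x) (n : ℕ) :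
    x ∈ iterImage T n := by
  induction n with
  | zero => trivial
  | succ n ih => exact ⟨x, ih, hx⟩

theorem mapsTo_iInter_closure_iterImage [TopologicalSpace X] (hT : Continuous T) :
    MapsTo T (⋂ n, closure (iterImage T n)) (⋂ n, closure (iterImage T n)) := by
  intro x hx
  refine mem_iInter.mpr fun n ↦ closure_mono (antitone_iterImage T n.le_succ) ?_
  exact image_closure_subset_closure_image hT (mem_image_of_mem T (mem_iInter.mp hx n))

theorem tendsto_diam_iterImage [PseudoMetricSpace X] {q : ℝ} (hq₀ : 0 ≤ q) (hq₁ : q < 1)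
    (hT : ∀ i, diam (iterImage T (i + 1)) ≤ q * diam (iterImage T i)) :
    Tendsto (fun n ↦ diam (iterImage T n)) atTop (𝓝 0) := by
  have hgeom : Tendsto (fun n ↦ q ^ n * diam (iterImage T 0)) atTop (𝓝 0) := by
    simpa using (tendsto_pow_atTop_nhds_zero_of_lt_one hq₀ hq₁).mul_const _
  have hbound (n : ℕ) : diam (iterImage T n) ≤ q ^ n * diam (iterImage T 0) :=
    le_geom (u := fun n ↦ diam (iterImage T n)) hq₀ n fun k _ ↦ hT k
  exact squeeze_zero (fun _ ↦ diam_nonneg) hbound hgeom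

end iterImage

/-- fixed-point theorem for strong contraction mappings: a continuous strong
contraction mapping on a nonempty complete bounded metric space admits a unique fixed point. -/
theorem strong_contraction_fixedPoint {X : Type*} [MetricSpace X] [CompleteSpace X] [Nonempty X]
    (hbdd : Bornology.IsBounded (Set.univ : Set X))
    (T : X → X) (hT : Continuous T)
    (hq : ∃ q : ℝ, 0 ≤ q ∧ q < 1 ∧
      ∀ i : ℕ, Metric.diam (iterImage T (i + 1)) ≤ q * Metric.diam (iterImage T i)) :
    ∃! xstar : X, T xstar = xstar := by
  obtain ⟨q, hq₀, hq₁, hcontr⟩ := hq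
  set K : ℕ → Set X := fun n ↦ closure (iterImage T n)
  have hK_bdd (n : ℕ) : Bornology.IsBounded (K n) := hbdd.subset (subset_univ _)
  have hK_diam : Tendsto (fun n ↦ diam (K n)) atTop (𝓝 0) := by
    simpa only [K, diam_closure] using tendsto_diam_iterImage hq₀ hq₁ hcontr
  have hK_sub : (⋂ n, K n).Subsingleton := subsingleton_iInter_of_tendsto_diam hK_bdd hK_diam
  obtain ⟨x, hx⟩ : (⋂ n, K n).Nonempty := by
    refine nonempty_iInter_of_nonempty_biInter (fun _ ↦ isClosed_closure) hK_bdd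
      (fun N ↦ ?_) hK_diam
    refine ((iterImage_nonempty T N).closure).mono (subset_iInter₂ fun n hn ↦ ?_)
    exact closure_mono (antitone_iterImage T hn)
  refine ⟨x, hK_sub (mapsTo_iInter_closure_iterImage hT hx) hx, fun y hy ↦ hK_sub ?_ hx⟩
  exact mem_iInter.mpr fun n ↦ subset_closure (mem_iterImage_of_isFixedPt hy n)
end

section
/- Let (X,d) be a nonempty complete bounded metric space and T : X → X a continuous map for which there exists q ∈ [0,1) such that, with X_0 = X and X_{i+1} = T(X_i), one has diam(X_{i+1}) ≤ q · diam(X_i) for all i, and let x* be the unique fixed point of T. Then the convergence rate estimate d(T^n(x_0), x*) ≤ q^n · diam(X) holds for every initial point x_0 ∈ X and every n ∈ ℕ. -/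
theorem iterImage_eq_range {X : Type*} (T : X → X) (n : ℕ) :
    iterImage T n = Set.range T^[n] := by
  induction n with
  | zero => exact Set.range_id.symm
  | succ n ih => rw [iterImage, ih, Function.iterate_succ', Set.range_comp]

theorem dist_iterate_fixedPoint_le_general {X : Type*} [MetricSpace X]
    (hbdd : Bornology.IsBounded (Set.univ : Set X))
    (T : X → X) (q : ℝ) (hq0 : 0 ≤ q)
    (hcontr : ∀ i : ℕ, Metric.diam (iterImage T (i + 1)) ≤ q * Metric.diam (iterImage T i))
    (xstar : X) (hfix : T xstar = xstar) :
    ∀ (x₀ : X) (n : ℕ), dist (T^[n] x₀) xstar ≤ q ^ n * Metric.diam (Set.univ : Set X) := by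
  intro x₀ n
  have hx₀ : T^[n] x₀ ∈ iterImage T n := iterImage_eq_range T n ▸ Set.mem_range_self x₀
  have hxstar : xstar ∈ iterImage T n :=
    iterImage_eq_range T n ▸ ⟨xstar, Function.iterate_fixed hfix n⟩
  calc dist (T^[n] x₀) xstar ≤ Metric.diam (iterImage T n) :=
        Metric.dist_le_diam_of_mem (hbdd.subset (Set.subset_univ _)) hx₀ hxstar
    _ ≤ q ^ n * Metric.diam (iterImage T 0) :=
        le_geom (u := fun i ↦ Metric.diam (iterImage T i)) hq0 n fun k _ ↦ hcontr k

/-- convergence rate estimate `d(Tⁿ x₀, x*) ≤ qⁿ * diam X` towards the unique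
fixed point `x*` of a continuous strong contraction mapping. -/
theorem dist_iterate_fixedPoint_le {X : Type*} [MetricSpace X] [CompleteSpace X] [Nonempty X]
    (hbdd : Bornology.IsBounded (Set.univ : Set X))
    (T : X → X) (hT : Continuous T) (q : ℝ) (hq0 : 0 ≤ q) (hq1 : q < 1)
    (hcontr : ∀ i : ℕ, Metric.diam (iterImage T (i + 1)) ≤ q * Metric.diam (iterImage T i))
    (xstar : X) (hfix : T xstar = xstar) (huniq : ∀ y : X, T y = y → y = xstar) :
    ∀ (x₀ : X) (n : ℕ), dist (T^[n] x₀) xstar ≤ q ^ n * Metric.diam (Set.univ : Set X) :=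
  dist_iterate_fixedPoint_le_general hbdd T q hq0 hcontr xstar hfix
end
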